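/- Let (μₙ)_{n≥0} be a consistent family of measures, μₙ on (Ω_{Vₙ}, B_{Vₙ}), and suppose there exist pairwise disjoint cylinder sets A_l = π_{V_{n_l}}^{-1}(A'_l), with A'_l ⊆ Ω_{V_{n_l}} measurable, μ_{n_l}(A'_l) < ∞, and ⋃_{l≥1} A_l = Ω. Let μ denote the (well-defined) set function on cylinder sets given by μ(π_{V_m}^{-1}(E)) = μ_m(E). Then the family (μₙ) extends to a (necessarily unique) σ-additive measure μ̄ on (Ω, B) with π_{Vₙ}(μ̄) = μₙ for all n if and only if μ(E) = Σ_{l≥1} μ(E ∩ A_l) for every cylinder set E. -/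

import Mathlib

open MeasureTheory

/-- Restriction map `π_Λ : Ω_Δ → Ω_Λ` for `Λ ⊆ Δ` finite subsets of `V`. -/
def restr {V Φ : Type*} {Λ Δ : Finset V} (h : Λ ⊆ Δ)
    (σ : {x // x ∈ Δ} → Φ) (x : {x // x ∈ Λ}) : Φ :=
  σ ⟨x.1, h x.2⟩

/-- Restriction map `π_Λ : Ω → Ω_Λ` for a finite subset `Λ` of `V`. -/
def restrV {V Φ : Type*} (Λ : Finset V)
    (σ : V → Φ) (x : {x // x ∈ Λ}) : Φ :=
  σ x.1

/-!
All sets in the finite-dimensional spaces `Ω_{Vₙ}` are measurable and a finite measure on a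
countable space is inner regular with respect to finite sets. Hence a consistent family of
finite measures has a projective limit: if a decreasing sequence of cylinders kept content
`≥ ε > 0`, finite inner approximations of their bases would have nonempty finite
intersections, and a König-type argument along an ultrafilter produces a point in all of them.

The identity `μ(E) = Σ_l μ(E ∩ A_l)` says that `μₙ` is the sum over `l` of the consistent
finite families "`μ` restricted to the cylinder `A_l`"; the sum of their projective limits is
the extension. Conversely the identity is σ-additivity of an extension along the partition
`(A_l)`, and uniqueness holds because any extension is σ-finite along the cylinders `A_l`.
-/
open Filter Function Topology
open scoped ENNReal

theorem exists_finite_subset_measure_sdiff_le {α : Type*} [MeasurableSpace α] [Countable α]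
    [MeasurableSingletonClass α] (μ : Measure α) [IsFiniteMeasure μ] (E : Set α) {δ : ℝ≥0∞}
    (hδ : 0 < δ) : ∃ F ⊆ E, F.Finite ∧ μ (E \ F) ≤ δ := by
  have := Encodable.ofCountable α
  let T : ℕ → Set α := fun n => Encodable.encode ⁻¹' Set.Iio n
  have hT_anti : Antitone fun n => E \ T n := fun m n hmn =>
    Set.sdiff_subset_sdiff_right fun x (hx : Encodable.encode x < m) => hx.trans_le hmn
  have hT_empty : ⋂ n, E \ T n = ∅ :=
    Set.eq_empty_of_forall_notMem fun x hx =>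
      (Set.mem_iInter.1 hx (Encodable.encode x + 1)).2 (Nat.lt_succ_self _)
  have h_tendsto : Tendsto (fun n => μ (E \ T n)) atTop (𝓝 0) := by
    have := tendsto_measure_iInter_atTop
      (fun n => (Set.to_countable _).measurableSet.nullMeasurableSet) hT_anti
      ⟨0, measure_ne_top μ _⟩
    rwa [hT_empty, measure_empty] at this
  obtain ⟨n, hn⟩ := (h_tendsto.eventually (ge_mem_nhds hδ)).exists
  refine ⟨E ∩ T n, Set.inter_subset_left,
    ((Set.finite_Iio n).preimage Encodable.encode_injective.injOn).inter_of_right E, ?_⟩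
  rwa [Set.sdiff_self_inter]

theorem nonempty_iInter_cylinder_of_finite {ι : Type*} {α : ι → Type*} {J : ℕ → Finset ι}
    {F : ∀ k, Set (Π i : J k, α i)} (hF : ∀ k, (F k).Finite)
    (h : ∀ k, (⋂ j ≤ k, cylinder (J j) (F j)).Nonempty) :
    (⋂ k, cylinder (J k) (F k)).Nonempty := by
  choose ω hω using h
  have hω_mem : ∀ j k, j ≤ k → (J j).restrict (ω k) ∈ F j := fun j k hjk =>
    Set.mem_iInter₂.1 (hω k) j hjk
  let 𝒰 : Ultrafilter ℕ := Ultrafilter.of atTop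
  -- a coordinate seen by some `J j` eventually ranges in a finite set, so it is `𝒰`-constant
  have h_const : ∀ i, (∃ j, i ∈ J j) → ∃ a, ∀ᶠ k in (𝒰 : Filter ℕ), ω k i = a := by
    rintro i ⟨j, hij⟩
    have h_ev : (fun f => f ⟨i, hij⟩) '' F j ∈ 𝒰.map (fun k => ω k i) :=
      Ultrafilter.of_le _ <| (eventually_ge_atTop j).mono fun k hk => ⟨_, hω_mem j k hk, rfl⟩
    obtain ⟨a, -, ha⟩ := Ultrafilter.eq_pure_of_finite_mem ((hF j).image _) h_ev
    exact ⟨a, show {a} ∈ 𝒰.map (fun k => ω k i) by simp [ha]⟩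
  classical
  let σ : Π i, α i := fun i => if hi : ∃ j, i ∈ J j then (h_const i hi).choose else ω 0 i
  refine ⟨σ, Set.mem_iInter.2 fun j => ?_⟩
  have h_ev : ∀ᶠ k in (𝒰 : Filter ℕ), j ≤ k ∧ ∀ i : J j, ω k i = σ i := by
    refine Filter.Eventually.and (Ultrafilter.of_le _ (eventually_ge_atTop j))
      (eventually_all.2 fun i => ?_)
    have hi : ∃ j', (i : ι) ∈ J j' := ⟨j, i.2⟩
    simpa [σ, hi] using (h_const i hi).choose_spec
  obtain ⟨k, hjk, hk⟩ := h_ev.exists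
  change (J j).restrict σ ∈ F j
  rw [show (J j).restrict σ = (J j).restrict (ω k) from funext fun i => (hk i).symm]
  exact hω_mem j k hjk

section ProjectiveLimit

variable {ι : Type*} {α : ι → Type*} [∀ i, MeasurableSpace (α i)] [∀ i, Countable (α i)]
  [∀ i, MeasurableSingletonClass (α i)] {P : ∀ J : Finset ι, Measure (Π j : J, α j)}
  [∀ J, IsFiniteMeasure (P J)]

theorem tendsto_projectiveFamilyContent_zero (hP : IsProjectiveMeasureFamily P)
    {s : ℕ → Set (Π i, α i)} (hs : ∀ n, s n ∈ measurableCylinders α) (hs_anti : Antitone s)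
    (hs_empty : ⋂ n, s n = ∅) :
    Tendsto (fun n => projectiveFamilyContent hP (s n)) atTop (𝓝 0) := by
  set m := projectiveFamilyContent hP
  have hm_anti : Antitone fun n => m (s n) := fun a b hab =>
    addContent_mono isSetSemiring_measurableCylinders (hs b) (hs a) (hs_anti hab)
  set ε := ⨅ n, m (s n)
  suffices hε : ε = 0 from hε ▸ tendsto_atTop_iInf hm_anti
  by_contra hε
  obtain ⟨δ, hδ_pos, hδ_sum⟩ := ENNReal.exists_pos_sum_of_countable hε ℕ
  choose J S _ hs_eq using fun n => (mem_measurableCylinders (s n)).1 (hs n)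
  choose F hFS hF_fin hF_small using fun n =>
    exists_finite_subset_measure_sdiff_le (P (J n)) (S n) (ENNReal.coe_pos.2 (hδ_pos n))
  have h_sub : ⋂ n, cylinder (J n) (F n) ⊆ ⋂ n, s n :=
    Set.iInter_mono fun n => (hs_eq n).symm ▸ Set.preimage_mono (hFS n)
  refine (nonempty_iInter_cylinder_of_finite hF_fin fun k => ?_).ne_empty
    (Set.subset_eq_empty h_sub hs_empty)
  -- otherwise `s k` would be covered by the cylinders over `S j \ F j`, of total content `< ε`
  by_contra h_empty
  have h_cover : s k ⊆ ⋃ j ∈ Finset.range (k + 1), cylinder (J j) (S j \ F j) := by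
    intro x hx
    by_contra hx'
    simp only [Set.mem_iUnion, Finset.mem_range, Nat.lt_succ_iff, not_exists, mem_cylinder,
      Set.mem_sdiff, not_and, not_not] at hx'
    refine h_empty ⟨x, Set.mem_iInter₂.2 fun j hjk => hx' j hjk ?_⟩
    rw [← mem_cylinder, ← hs_eq j]
    exact hs_anti hjk hx
  have h_small : m (s k) < ε := calc
    m (s k) ≤ m (⋃ j ∈ Finset.range (k + 1), cylinder (J j) (S j \ F j)) :=
        addContent_mono isSetSemiring_measurableCylinders (hs k)
          (isSetRing_measurableCylinders.biUnion_mem _ fun j _ =>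
            cylinder_mem_measurableCylinders _ _ (Set.to_countable _).measurableSet) h_cover
    _ ≤ ∑ j ∈ Finset.range (k + 1), m (cylinder (J j) (S j \ F j)) :=
        addContent_biUnion_le isSetRing_measurableCylinders fun j _ =>
          cylinder_mem_measurableCylinders _ _ (Set.to_countable _).measurableSet
    _ = ∑ j ∈ Finset.range (k + 1), P (J j) (S j \ F j) := by
        simp only [m, projectiveFamilyContent_cylinder hP (Set.to_countable _).measurableSet]
    _ ≤ ∑' j, (δ j : ℝ≥0∞) := (Finset.sum_le_sum fun j _ => hF_small j).trans
        (ENNReal.sum_le_tsum _)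
    _ < ε := hδ_sum
  exact h_small.not_ge (iInf_le _ k)

theorem isSigmaSubadditive_projectiveFamilyContent (hP : IsProjectiveMeasureFamily P) :
    (projectiveFamilyContent hP).IsSigmaSubadditive :=
  isSigmaSubadditive_of_addContent_iUnion_eq_tsum isSetRing_measurableCylinders
    fun _ hf hf_Union hf_disj =>
      addContent_iUnion_eq_sum_of_tendsto_zero isSetRing_measurableCylinders _
        (fun _ _ => projectiveFamilyContent_ne_top hP)
        (fun _ => tendsto_projectiveFamilyContent_zero hP) hf hf_Union hf_disj

theorem exists_isProjectiveLimit (hP : IsProjectiveMeasureFamily P) :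
    ∃ μ : Measure (Π i, α i), IsProjectiveLimit μ P := by
  refine ⟨(projectiveFamilyContent hP).measure isSetSemiring_measurableCylinders
    generateFrom_measurableCylinders.ge (isSigmaSubadditive_projectiveFamilyContent hP),
    fun J => ?_⟩
  ext S hS
  rw [Measure.map_apply (Finset.measurable_restrict J) hS, ← cylinder,
    AddContent.measure_eq _ _ generateFrom_measurableCylinders.symm _
      (cylinder_mem_measurableCylinders J S hS), projectiveFamilyContent_cylinder hP hS]

end ProjectiveLimit

section Sequential

variable {ι : Type*} {α : ι → Type*} [∀ i, MeasurableSpace (α i)] {Vn : ℕ → Finset ι}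

def IsProjectiveMeasureSeq (hmono : Monotone Vn) (τ : ∀ n, Measure (Π i : Vn n, α i)) : Prop :=
  ∀ i j (h : i ≤ j), (τ j).map (Finset.restrict₂ (hmono h)) = τ i

theorem exists_finset_subset_of_monotone (hmono : Monotone Vn) (hcover : ∀ i, ∃ n, i ∈ Vn n)
    (J : Finset ι) : ∃ n, J ⊆ Vn n := by
  have h_dir : Directed (· ⊆ ·) fun n => (Vn n : Set ι) :=
    (hmono.directed_le).mono_comp _ fun _ _ h => Finset.coe_subset.2 h
  obtain ⟨n, hn⟩ := h_dir.exists_mem_subset_of_finset_subset_biUnion (s := J)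
    fun i _ => Set.mem_iUnion.2 (hcover i)
  exact ⟨n, Finset.coe_subset.1 hn⟩

noncomputable def finsetFamilyOfSeq (hJ : ∀ J : Finset ι, ∃ n, J ⊆ Vn n)
    (τ : ∀ n, Measure (Π i : Vn n, α i)) (J : Finset ι) : Measure (Π j : J, α j) :=
  (τ (hJ J).choose).map (Finset.restrict₂ (hJ J).choose_spec)

variable {hmono : Monotone Vn} {τ : ∀ n, Measure (Π i : Vn n, α i)}

theorem IsProjectiveMeasureSeq.map_restrict₂_of_le (hτ : IsProjectiveMeasureSeq hmono τ)
    {J : Finset ι} {m n : ℕ} (hmn : m ≤ n) (hJ : J ⊆ Vn m) :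
    (τ m).map (Finset.restrict₂ hJ) = (τ n).map (Finset.restrict₂ (hJ.trans (hmono hmn))) := by
  rw [← hτ m n hmn, Measure.map_map (Finset.measurable_restrict₂ _)
    (Finset.measurable_restrict₂ _), Finset.restrict₂_comp_restrict₂]

theorem IsProjectiveMeasureSeq.map_restrict₂_congr (hτ : IsProjectiveMeasureSeq hmono τ)
    {J : Finset ι} {m n : ℕ} (hm : J ⊆ Vn m) (hn : J ⊆ Vn n) :
    (τ m).map (Finset.restrict₂ hm) = (τ n).map (Finset.restrict₂ hn) := by
  rw [hτ.map_restrict₂_of_le (le_max_left m n), hτ.map_restrict₂_of_le (le_max_right m n)]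

theorem finsetFamilyOfSeq_eq (hJ : ∀ J : Finset ι, ∃ n, J ⊆ Vn n)
    (hτ : IsProjectiveMeasureSeq hmono τ) {J : Finset ι} {n : ℕ} (h : J ⊆ Vn n) :
    finsetFamilyOfSeq hJ τ J = (τ n).map (Finset.restrict₂ h) :=
  hτ.map_restrict₂_congr _ h

theorem isProjectiveMeasureFamily_finsetFamilyOfSeq (hJ : ∀ J : Finset ι, ∃ n, J ⊆ Vn n)
    (hτ : IsProjectiveMeasureSeq hmono τ) : IsProjectiveMeasureFamily (finsetFamilyOfSeq hJ τ) := by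
  intro I J hJI
  obtain ⟨n, hn⟩ := hJ I
  rw [finsetFamilyOfSeq_eq hJ hτ hn, finsetFamilyOfSeq_eq hJ hτ (hJI.trans hn),
    Measure.map_map (Finset.measurable_restrict₂ _) (Finset.measurable_restrict₂ _),
    Finset.restrict₂_comp_restrict₂]

theorem exists_map_restrict_eq_of_isProjectiveMeasureSeq [∀ i, Countable (α i)]
    [∀ i, MeasurableSingletonClass (α i)] [∀ n, IsFiniteMeasure (τ n)]
    (hJ : ∀ J : Finset ι, ∃ n, J ⊆ Vn n) (hτ : IsProjectiveMeasureSeq hmono τ) :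
    ∃ ν : Measure (Π i, α i), ∀ n, ν.map (Vn n).restrict = τ n := by
  have (J : Finset ι) : IsFiniteMeasure (finsetFamilyOfSeq hJ τ J) := by
    rw [finsetFamilyOfSeq]; infer_instance
  obtain ⟨ν, hν⟩ := exists_isProjectiveLimit (isProjectiveMeasureFamily_finsetFamilyOfSeq hJ hτ)
  exact ⟨ν, fun n => by rw [hν, finsetFamilyOfSeq_eq hJ hτ subset_rfl]; exact Measure.map_id⟩

theorem ext_of_map_restrict_eq (hJ : ∀ J : Finset ι, ∃ n, J ⊆ Vn n)
    {ν ν' : Measure (Π i, α i)} (h : ∀ n, ν.map (Vn n).restrict = ν'.map (Vn n).restrict)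
    {A : ℕ → Set (Π i, α i)} (hA : ∀ l, A l ∈ measurableCylinders α)
    (hA_cover : ⋃ l, A l = Set.univ) (hA_fin : ∀ l, ν (A l) ≠ ∞) : ν = ν' := by
  refine Measure.ext_of_generateFrom_of_iUnion _ A generateFrom_measurableCylinders.symm
    isPiSystem_measurableCylinders hA_cover hA hA_fin fun s hs => ?_
  obtain ⟨J, S, hS, rfl⟩ := (mem_measurableCylinders s).1 hs
  obtain ⟨n, hn⟩ := hJ J
  have h_meas : MeasurableSet (Finset.restrict₂ (π := α) hn ⁻¹' S) :=
    Finset.measurable_restrict₂ hn hS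
  change ν ((Vn n).restrict ⁻¹' (Finset.restrict₂ hn ⁻¹' S)) =
    ν' ((Vn n).restrict ⁻¹' (Finset.restrict₂ hn ⁻¹' S))
  rw [← Measure.map_apply (Finset.measurable_restrict _) h_meas, h,
    Measure.map_apply (Finset.measurable_restrict _) h_meas]

variable (hmono) in
/-- `n ↦ τₙ(· ∩ A)`: the family `τ` restricted to the cylinder with base `A` at level `a`. -/
noncomputable def restrictToCylinder (τ : ∀ n, Measure (Π i : Vn n, α i)) (a : ℕ)
    (A : Set (Π i : Vn a, α i)) (n : ℕ) : Measure (Π i : Vn n, α i) :=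
  ((τ (max n a)).restrict (Finset.restrict₂ (hmono (le_max_right n a)) ⁻¹' A)).map
    (Finset.restrict₂ (hmono (le_max_left n a)))

theorem restrictToCylinder_apply {a : ℕ} (A : Set (Π i : Vn a, α i)) {n : ℕ}
    {S : Set (Π i : Vn n, α i)} (hS : MeasurableSet S) :
    restrictToCylinder hmono τ a A n S = τ (max n a)
      (Finset.restrict₂ (hmono (le_max_left n a)) ⁻¹' S ∩
        Finset.restrict₂ (hmono (le_max_right n a)) ⁻¹' A) := by
  rw [restrictToCylinder, Measure.map_apply (Finset.measurable_restrict₂ _) hS,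
    Measure.restrict_apply (Finset.measurable_restrict₂ _ hS)]

theorem restrictToCylinder_univ (hτ : IsProjectiveMeasureSeq hmono τ) {a : ℕ}
    {A : Set (Π i : Vn a, α i)} (hA : MeasurableSet A) (n : ℕ) :
    restrictToCylinder hmono τ a A n Set.univ = τ a A := by
  rw [restrictToCylinder_apply A MeasurableSet.univ, Set.preimage_univ, Set.univ_inter,
    ← hτ a (max n a) (le_max_right n a), Measure.map_apply (Finset.measurable_restrict₂ _) hA]

theorem IsProjectiveMeasureSeq.restrictToCylinder (hτ : IsProjectiveMeasureSeq hmono τ)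
    {a : ℕ} {A : Set (Π i : Vn a, α i)} (hA : MeasurableSet A) :
    IsProjectiveMeasureSeq hmono (restrictToCylinder hmono τ a A) := by
  intro i j hij
  ext S hS
  have h_le : max i a ≤ max j a := max_le_max hij le_rfl
  rw [Measure.map_apply (Finset.measurable_restrict₂ _) hS,
    restrictToCylinder_apply A (Finset.measurable_restrict₂ _ hS), restrictToCylinder_apply A hS,
    ← hτ _ _ h_le, Measure.map_apply (Finset.measurable_restrict₂ _)
      ((Finset.measurable_restrict₂ _ hS).inter (Finset.measurable_restrict₂ _ hA))]
  rfl

theorem sum_restrictToCylinder_apply {a : ℕ → ℕ} (A : ∀ l, Set (Π i : Vn (a l), α i)) {n : ℕ}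
    {S : Set (Π i : Vn n, α i)} (hS : MeasurableSet S) :
    Measure.sum (fun l => restrictToCylinder hmono τ (a l) (A l) n) S = ∑' l, τ (max n (a l))
      (Finset.restrict₂ (hmono (le_max_left n (a l))) ⁻¹' S ∩
        Finset.restrict₂ (hmono (le_max_right n (a l))) ⁻¹' A l) := by
  rw [Measure.sum_apply _ hS]
  exact tsum_congr fun l => restrictToCylinder_apply (A l) hS

theorem map_restrict_restrict_eq_restrictToCylinder {ν : Measure (Π i, α i)}
    (hν : ∀ n, ν.map (Vn n).restrict = τ n) {a : ℕ} {A : Set (Π i : Vn a, α i)}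
    (hA : MeasurableSet A) (n : ℕ) :
    (ν.restrict ((Vn a).restrict ⁻¹' A)).map (Vn n).restrict = restrictToCylinder hmono τ a A n := by
  ext S hS
  rw [Measure.map_apply (Finset.measurable_restrict _) hS,
    Measure.restrict_apply (Finset.measurable_restrict _ hS), restrictToCylinder_apply A hS,
    ← hν (max n a), Measure.map_apply (Finset.measurable_restrict _)
      ((Finset.measurable_restrict₂ _ hS).inter (Finset.measurable_restrict₂ _ hA))]
  rfl

theorem sum_restrictToCylinder_eq {ν : Measure (Π i, α i)} (hν : ∀ n, ν.map (Vn n).restrict = τ n)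
    {a : ℕ → ℕ} {A : ∀ l, Set (Π i : Vn (a l), α i)} (hA : ∀ l, MeasurableSet (A l))
    (hA_disj : Pairwise (Disjoint on fun l => (Vn (a l)).restrict ⁻¹' A l))
    (hA_cover : ⋃ l, (Vn (a l)).restrict ⁻¹' A l = Set.univ) (n : ℕ) :
    Measure.sum (fun l => restrictToCylinder hmono τ (a l) (A l) n) = τ n := by
  have h_meas l : MeasurableSet ((Vn (a l)).restrict ⁻¹' A l) :=
    Finset.measurable_restrict _ (hA l)
  simp_rw [← map_restrict_restrict_eq_restrictToCylinder hν (hA _), ← hν n]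
  rw [← Measure.map_sum (Finset.measurable_restrict _).aemeasurable,
    ← Measure.restrict_iUnion hA_disj h_meas, hA_cover, Measure.restrict_univ]

theorem exists_map_restrict_eq_of_sum_restrictToCylinder_eq [∀ i, Countable (α i)]
    [∀ i, MeasurableSingletonClass (α i)] (hJ : ∀ J : Finset ι, ∃ n, J ⊆ Vn n)
    (hτ : IsProjectiveMeasureSeq hmono τ) {a : ℕ → ℕ} {A : ∀ l, Set (Π i : Vn (a l), α i)}
    (hA : ∀ l, MeasurableSet (A l)) (hA_fin : ∀ l, τ (a l) (A l) ≠ ∞)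
    (h_sum : ∀ n, Measure.sum (fun l => restrictToCylinder hmono τ (a l) (A l) n) = τ n) :
    ∃ ν : Measure (Π i, α i), ∀ n, ν.map (Vn n).restrict = τ n := by
  have _ l n : IsFiniteMeasure (restrictToCylinder hmono τ (a l) (A l) n) :=
    ⟨by rw [restrictToCylinder_univ hτ (hA l)]; exact (hA_fin l).lt_top⟩
  choose ν hν using fun l =>
    exists_map_restrict_eq_of_isProjectiveMeasureSeq hJ (hτ.restrictToCylinder (hA l))
  refine ⟨Measure.sum ν, fun n => ?_⟩
  rw [Measure.map_sum (Finset.measurable_restrict _).aemeasurable, ← h_sum n]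
  simp_rw [hν]

end Sequential

theorem extension_iff_countably_additive_on_cover_general
    {Φ V : Type*} [Countable Φ] [MeasurableSpace Φ] [DiscreteMeasurableSpace Φ]
    (Vn : ℕ → Finset V) (hmono : ∀ i j, i ≤ j → Vn i ⊆ Vn j)
    (hcover : ∀ x : V, ∃ n, x ∈ Vn n)
    (μ : ∀ n : ℕ, Measure ({x // x ∈ Vn n} → Φ))
    (hcons : ∀ i j (h : i ≤ j), (μ j).map (restr (hmono i j h)) = μ i)
    (nl : ℕ → ℕ) (A' : ∀ l : ℕ, Set ({x // x ∈ Vn (nl l)} → Φ))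
    (hA' : ∀ l, MeasurableSet (A' l)) (hfin : ∀ l, μ (nl l) (A' l) < ⊤)
    (hdisj : Pairwise (Function.onFun Disjoint
      (fun l => restrV (Vn (nl l)) ⁻¹' A' l : ℕ → Set (V → Φ))))
    (hAcover : ⋃ l : ℕ, restrV (Vn (nl l)) ⁻¹' A' l = (Set.univ : Set (V → Φ))) :
    (∃! ν : Measure (V → Φ), ∀ n, ν.map (restrV (Vn n)) = μ n) ↔
    (∀ (m : ℕ) (E : Set ({x // x ∈ Vn m} → Φ)), MeasurableSet E →
      μ m E = ∑' l : ℕ,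
        μ (max m (nl l))
          ((restr (hmono m (max m (nl l)) (le_max_left m (nl l))) ⁻¹' E) ∩
           (restr (hmono (nl l) (max m (nl l)) (le_max_right m (nl l))) ⁻¹' A' l))) := by
  have hmono' : Monotone Vn := fun i j h => hmono i j h
  have hμ : IsProjectiveMeasureSeq (α := fun _ => Φ) hmono' μ := hcons
  have hJ := exists_finset_subset_of_monotone hmono' hcover
  constructor
  · rintro ⟨ν, hν, -⟩ n E hE
    rw [← sum_restrictToCylinder_eq (α := fun _ => Φ) (hmono := hmono') hν hA' hdisj hAcover n]
    exact sum_restrictToCylinder_apply _ hE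
  · intro hsum
    have h_sum (n : ℕ) :
        Measure.sum (fun l => restrictToCylinder (α := fun _ => Φ) hmono' μ (nl l) (A' l) n) = μ n :=
      Measure.ext fun E hE => (sum_restrictToCylinder_apply _ hE).trans (hsum n E hE).symm
    obtain ⟨ν, hν⟩ := exists_map_restrict_eq_of_sum_restrictToCylinder_eq hJ hμ hA'
      (fun l => (hfin l).ne) h_sum
    refine ⟨ν, hν, fun ν' hν' => ext_of_map_restrict_eq hJ (fun n => (hν' n).trans (hν n).symm)
      (fun l => cylinder_mem_measurableCylinders _ _ (hA' l)) hAcover fun l => ?_⟩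
    change ν' (restrV _ ⁻¹' A' l) ≠ ∞
    rw [← Measure.map_apply (f := restrV (Vn (nl l))) (Finset.measurable_restrict _) (hA' l),
      hν' (nl l)]
    exact (hfin l).ne

/-- Let `(μₙ)` be a consistent family of measures on the `(Ω_{Vₙ}, B_{Vₙ})` and suppose `Ω`
is the union of pairwise disjoint cylinder sets `A_l = π_{V_{n_l}}⁻¹(A'_l)` of finite
measure. Then the family extends to a (necessarily unique) σ-additive measure `μ̄` on
`(Ω, B)` with `π_{Vₙ}(μ̄) = μₙ` for all `n` if and only if the cylinder set function `μ`
(with `μ(π_{V_m}⁻¹ E) = μ_m(E)`) satisfies `μ(E) = Σ_l μ(E ∩ A_l)` for every cylinder set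
`E`; here `E ∩ A_l` is a cylinder with base in `Ω_{V_{max(m, n_l)}}`. -/
theorem extension_iff_countably_additive_on_cover
    {Φ V : Type*} [Countable Φ] [Nonempty Φ] [MeasurableSpace Φ] [DiscreteMeasurableSpace Φ]
    [Countable V] [Infinite V]
    (Vn : ℕ → Finset V) (hmono : ∀ i j, i ≤ j → Vn i ⊆ Vn j)
    (hcover : ∀ x : V, ∃ n, x ∈ Vn n)
    (μ : ∀ n : ℕ, Measure ({x // x ∈ Vn n} → Φ))
    (hcons : ∀ i j (h : i ≤ j), (μ j).map (restr (hmono i j h)) = μ i)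
    (nl : ℕ → ℕ) (A' : ∀ l : ℕ, Set ({x // x ∈ Vn (nl l)} → Φ))
    (hA' : ∀ l, MeasurableSet (A' l)) (hfin : ∀ l, μ (nl l) (A' l) < ⊤)
    (hdisj : Pairwise (Function.onFun Disjoint
      (fun l => restrV (Vn (nl l)) ⁻¹' A' l : ℕ → Set (V → Φ))))
    (hAcover : ⋃ l : ℕ, restrV (Vn (nl l)) ⁻¹' A' l = (Set.univ : Set (V → Φ))) :
    (∃! ν : Measure (V → Φ), ∀ n, ν.map (restrV (Vn n)) = μ n) ↔
    (∀ (m : ℕ) (E : Set ({x // x ∈ Vn m} → Φ)), MeasurableSet E →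
      μ m E = ∑' l : ℕ,
        μ (max m (nl l))
          ((restr (hmono m (max m (nl l)) (le_max_left m (nl l))) ⁻¹' E) ∩
           (restr (hmono (nl l) (max m (nl l)) (le_max_right m (nl l))) ⁻¹' A' l))) :=
  extension_iff_countably_additive_on_cover_general Vn hmono hcover μ hcons nl A' hA' hfin hdisj
    hAcover
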